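/- arXiv:2509.11208 — 2 statements merged into one kernel-verified Lean document; each statement's English description precedes it below -/
import Mathlib

section
/- Let n ≥ 1, let a ∈ ℝ, let w : {1,…,n} → ℝ be nonnegative weights with Σ_{i=1}^n w_i = 1, and let ψ : {1,…,n} → ℝ. For each permutation π of {1,…,n} define q_π = σ(a + Σ_{i=1}^n w_i·ψ(π(i))), where σ is the logistic function. Then the average of |q_π − q_{π'}| over two independent uniformly random permutations π, π' of {1,…,n} satisfies E_{π,π'}|q_π − q_{π'}| ≤ (1/4)·E_{U,V}|ψ(U) − ψ(V)|, where U and V are independent and each uniformly distributed on {1,…,n}. -/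
/-- The logistic (sigmoid) function `σ(t) = 1 / (1 + e^{-t})`. -/
noncomputable def logistic (t : ℝ) : ℝ := 1 / (1 + Real.exp (-t))

/-- The prediction under permutation `π`: `q_π = σ(a + ∑_i w_i·ψ(pos_π(i)))`, where the
position of chunk `i` in `{1,…,n}` is encoded as `(π i : ℕ) + 1` for `π` a permutation
of `Fin n`. -/
noncomputable def qperm (n : ℕ) (a : ℝ) (w : Fin n → ℝ) (ψ : ℕ → ℝ)
    (π : Equiv.Perm (Fin n)) : ℝ :=
  logistic (a + ∑ i : Fin n, w i * ψ ((π i : ℕ) + 1))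

/-!
By the `1/4`-Lipschitz property of the logistic function and the triangle inequality,
`|q_π - q_π'| ≤ (1/4) ∑ᵢ wᵢ |ψ(π i) - ψ(π' i)|`. Averaging over `π, π'` and exchanging the
average with the sum over `i`, each term becomes `E|ψ(U) - ψ(V)|`, because the position `π i` of
a fixed chunk under a uniform permutation is uniform; the weights then sum to `1`.
-/

open Finset
open scoped BigOperators

lemma logistic_eq_sigmoid : logistic = Real.sigmoid := by
  ext t
  rw [logistic, one_div, Real.sigmoid_def]

lemma Real.sigmoid_mul_one_sub_sigmoid_le (x : ℝ) : x.sigmoid * (1 - x.sigmoid) ≤ 1 / 4 := by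
  nlinarith [sq_nonneg (x.sigmoid - 1 / 2)]

lemma Real.lipschitzWith_sigmoid : LipschitzWith (1 / 4) Real.sigmoid := by
  refine lipschitzWith_of_nnnorm_deriv_le differentiable_sigmoid fun x ↦ ?_
  rw [← NNReal.coe_le_coe, coe_nnnorm, Real.deriv_sigmoid, Real.norm_eq_abs,
    abs_of_nonneg (mul_nonneg (Real.sigmoid_nonneg x) (sub_nonneg.2 (Real.sigmoid_le_one x)))]
  simpa using Real.sigmoid_mul_one_sub_sigmoid_le x

lemma abs_logistic_sub_logistic_le (x y : ℝ) :
    |logistic x - logistic y| ≤ 1 / 4 * |x - y| := by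
  simpa [logistic_eq_sigmoid, Real.dist_eq] using Real.lipschitzWith_sigmoid.dist_le_mul x y

lemma abs_sum_mul_sub_sum_mul_le {ι : Type*} (s : Finset ι) {w : ι → ℝ} (hw : ∀ i ∈ s, 0 ≤ w i)
    (x y : ι → ℝ) :
    |∑ i ∈ s, w i * x i - ∑ i ∈ s, w i * y i| ≤ ∑ i ∈ s, w i * |x i - y i| := by
  rw [← sum_sub_distrib]
  refine (abs_sum_le_sum_abs _ _).trans (sum_le_sum fun i hi ↦ ?_)
  rw [← mul_sub, abs_mul, abs_of_nonneg (hw i hi)]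

lemma abs_qperm_sub_qperm_le {n : ℕ} (a : ℝ) {w : Fin n → ℝ} (hw : ∀ i, 0 ≤ w i) (ψ : ℕ → ℝ)
    (π π' : Equiv.Perm (Fin n)) :
    |qperm n a w ψ π - qperm n a w ψ π'| ≤
      1 / 4 * ∑ i, w i * |ψ ((π i : ℕ) + 1) - ψ ((π' i : ℕ) + 1)| := by
  refine (abs_logistic_sub_logistic_le _ _).trans ?_
  rw [add_sub_add_left_eq_sub]
  gcongr
  exact abs_sum_mul_sub_sum_mul_le _ (fun i _ ↦ hw i) _ _

section Marginal

variable {α M : Type*} [Fintype α] [DecidableEq α] [AddCommMonoid M] [Module ℚ≥0 M]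

lemma Equiv.Perm.expect_apply (i : α) (g : α → M) : 𝔼 σ : Equiv.Perm α, g (σ i) = 𝔼 a, g a := by
  have : Nonempty α := ⟨i⟩
  have hindep : ∀ j, 𝔼 σ : Equiv.Perm α, g (σ i) = 𝔼 σ : Equiv.Perm α, g (σ j) := fun j ↦
    Fintype.expect_equiv (Equiv.mulRight (Equiv.swap i j)) _ _ fun σ ↦ by simp
  calc 𝔼 σ : Equiv.Perm α, g (σ i)
      = 𝔼 j, 𝔼 σ : Equiv.Perm α, g (σ j) := by simp_rw [← hindep, Fintype.expect_const]
    _ = 𝔼 σ : Equiv.Perm α, 𝔼 j, g (σ j) := expect_comm _ _ _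
    _ = 𝔼 a, g a := by
      simp_rw [fun σ : Equiv.Perm α ↦ Fintype.expect_equiv σ (fun j ↦ g (σ j)) g fun _ ↦ rfl,
        Fintype.expect_const]

lemma Equiv.Perm.expect_expect_apply (i : α) (f : α → α → M) :
    𝔼 σ : Equiv.Perm α, 𝔼 τ : Equiv.Perm α, f (σ i) (τ i) = 𝔼 a, 𝔼 b, f a b := by
  calc 𝔼 σ : Equiv.Perm α, 𝔼 τ : Equiv.Perm α, f (σ i) (τ i)
      = 𝔼 σ : Equiv.Perm α, 𝔼 b, f (σ i) b :=
        expect_congr rfl fun σ _ ↦ Equiv.Perm.expect_apply i (f (σ i))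
    _ = 𝔼 a, 𝔼 b, f a b := Equiv.Perm.expect_apply i fun a ↦ 𝔼 b, f a b

end Marginal

lemma Fintype.expect_expect_eq_sum_sum_div {ι K : Type*} [Fintype ι] [Semifield K] [CharZero K]
    (f : ι → ι → K) :
    𝔼 i, 𝔼 j, f i j = 1 / (Fintype.card ι : K) ^ 2 * ∑ i, ∑ j, f i j := by
  simp_rw [Fintype.expect_eq_sum_div_card, ← sum_div]
  ring

lemma sum_Icc_one_eq_sum_fin {M : Type*} [AddCommMonoid M] (n : ℕ) (f : ℕ → M) :
    ∑ u ∈ Icc 1 n, f u = ∑ u : Fin n, f ((u : ℕ) + 1) := by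
  rw [← Ico_add_one_right_eq_Icc, sum_Ico_eq_sum_range,
    Fin.sum_univ_eq_sum_range (fun u ↦ f (u + 1))]
  simp [add_comm]

theorem perm_pairwise_reduction_general (n : ℕ) (a : ℝ) (w : Fin n → ℝ) (ψ : ℕ → ℝ)
    (hw0 : ∀ i, 0 ≤ w i) (hw1 : ∑ i, w i = 1) :
    (1 / ((Nat.factorial n : ℝ)) ^ 2) *
        ∑ π : Equiv.Perm (Fin n), ∑ π' : Equiv.Perm (Fin n),
          |qperm n a w ψ π - qperm n a w ψ π'| ≤
      (1 / 4) * ((1 / (n : ℝ) ^ 2) *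
        ∑ u ∈ Finset.Icc 1 n, ∑ v ∈ Finset.Icc 1 n, |ψ u - ψ v|) := by
  set D : ℝ := 𝔼 u : Fin n, 𝔼 v : Fin n, |ψ ((u : ℕ) + 1) - ψ ((v : ℕ) + 1)| with hD_def
  have hD : 1 / (n : ℝ) ^ 2 * ∑ u ∈ Icc 1 n, ∑ v ∈ Icc 1 n, |ψ u - ψ v| = D := by
    simp_rw [sum_Icc_one_eq_sum_fin, D, Fintype.expect_expect_eq_sum_sum_div, Fintype.card_fin]
  have hL : 1 / (n.factorial : ℝ) ^ 2 * ∑ π : Equiv.Perm (Fin n), ∑ π' : Equiv.Perm (Fin n),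
      |qperm n a w ψ π - qperm n a w ψ π'| = 𝔼 π, 𝔼 π', |qperm n a w ψ π - qperm n a w ψ π'| := by
    rw [Fintype.expect_expect_eq_sum_sum_div, Fintype.card_perm, Fintype.card_fin]
  rw [hL, hD]
  calc 𝔼 π, 𝔼 π', |qperm n a w ψ π - qperm n a w ψ π'|
      ≤ 𝔼 π : Equiv.Perm (Fin n), 𝔼 π' : Equiv.Perm (Fin n),
          1 / 4 * ∑ i, w i * |ψ ((π i : ℕ) + 1) - ψ ((π' i : ℕ) + 1)| := by
        gcongr with π _ π' _
        exact abs_qperm_sub_qperm_le a hw0 ψ π π'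
    _ = 1 / 4 * ∑ i, w i * 𝔼 π : Equiv.Perm (Fin n), 𝔼 π' : Equiv.Perm (Fin n),
          |ψ ((π i : ℕ) + 1) - ψ ((π' i : ℕ) + 1)| := by
        simp_rw [← mul_expect, expect_sum_comm, ← mul_expect]
    _ = 1 / 4 * ∑ i, w i * D := by
        simp_rw [Equiv.Perm.expect_expect_apply _
          fun u v : Fin n ↦ |ψ ((u : ℕ) + 1) - ψ ((v : ℕ) + 1)|, ← hD_def]
    _ = 1 / 4 * D := by rw [← sum_mul, hw1, one_mul]

/-- **Core reduction step of the Quantified Martingale Violation theorem.**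
For nonnegative weights summing to 1, the average of `|q_π − q_{π'}|` over two independent
uniform permutations is at most `(1/4)·E_{U,V}|ψ(U) − ψ(V)|` with `U, V` i.i.d. uniform
on `{1,…,n}`. -/
theorem perm_pairwise_reduction (n : ℕ) (hn : 1 ≤ n) (a : ℝ) (w : Fin n → ℝ) (ψ : ℕ → ℝ)
    (hw0 : ∀ i, 0 ≤ w i) (hw1 : ∑ i, w i = 1) :
    (1 / ((Nat.factorial n : ℝ)) ^ 2) *
        ∑ π : Equiv.Perm (Fin n), ∑ π' : Equiv.Perm (Fin n),
          |qperm n a w ψ π - qperm n a w ψ π'| ≤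
      (1 / 4) * ((1 / (n : ℝ) ^ 2) *
        ∑ u ∈ Finset.Icc 1 n, ∑ v ∈ Finset.Icc 1 n, |ψ u - ψ v|) :=
  perm_pairwise_reduction_general n a w ψ hw0 hw1
end

section
/- Let Y be a nonempty finite type, let S̄ be a probability mass function on Y with S̄(y) > 0 for all y, let A ⊆ Y with 0 < S̄(A) < 1, let λ ∈ ℝ, and define the exponentially tilted distribution P*(y) = S̄(y)·e^{λ·1_A(y)} / Z with Z = Σ_y S̄(y)·e^{λ·1_A(y)}. Then KL(P* ‖ S̄) = klBer(P*(A), S̄(A)), i.e., the EDFL lower bound holds with equality for the I-projection of S̄ onto the set of distributions assigning mass P*(A) to A. -/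
/-- Kullback–Leibler divergence between probability mass functions on a finite type,
`KL(P‖Q) = ∑_y P(y)·log(P(y)/Q(y))`, with the convention `0·log 0 = 0`. -/
noncomputable def KLf {Y : Type*} [Fintype Y] (P Q : Y → ℝ) : ℝ :=
  ∑ y, if P y = 0 then 0 else P y * Real.log (P y / Q y)

/-- Binary Kullback–Leibler divergence
`klBer(p,q) = p·log(p/q) + (1−p)·log((1−p)/(1−q))`, with the convention `0·log 0 = 0`. -/
noncomputable def klBer (p q : ℝ) : ℝ :=
  (if p = 0 then 0 else p * Real.log (p / q)) +
    (if p = 1 then 0 else (1 - p) * Real.log ((1 - p) / (1 - q)))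

/-!
The likelihood ratio `P*(y) / S̄(y) = e^{λ·1_A(y)} / Z` takes one value on `A` and another on
`Aᶜ`. When `P = c·Q` on a block `s`, the block's contribution `∑_{y∈s} P(y) log(P(y)/Q(y))` is
`P(s) log c = P(s) log(P(s)/Q(s))`; adding the contributions of `A` and `Aᶜ` gives `klBer`.
-/

open Finset Real

theorem KLf_eq_sum {Y : Type*} [Fintype Y] (P Q : Y → ℝ) :
    KLf P Q = ∑ y, P y * log (P y / Q y) := by
  refine sum_congr rfl fun y _ => ?_
  split_ifs with h <;> simp [h]

theorem klBer_eq (p q : ℝ) :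
    klBer p q = p * log (p / q) + (1 - p) * log ((1 - p) / (1 - q)) := by
  unfold klBer
  congr 1 <;> split_ifs with h <;> simp [h]

theorem sum_mul_log_div_of_forall_eq_mul {ι : Type*} (s : Finset ι) (P Q : ι → ℝ) (c : ℝ)
    (hQ : ∀ y ∈ s, Q y ≠ 0) (hPQ : ∀ y ∈ s, P y = c * Q y) :
    ∑ y ∈ s, P y * log (P y / Q y) = (∑ y ∈ s, P y) * log ((∑ y ∈ s, P y) / ∑ y ∈ s, Q y) := by
  have hratio : ∀ y ∈ s, P y / Q y = c := fun y hy => by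
    rw [hPQ y hy, mul_div_cancel_right₀ _ (hQ y hy)]
  have hmass : ∑ y ∈ s, P y = c * ∑ y ∈ s, Q y := by
    rw [mul_sum]; exact sum_congr rfl hPQ
  rw [sum_congr rfl fun y hy => by rw [hratio y hy], ← sum_mul]
  by_cases hQs : ∑ y ∈ s, Q y = 0
  · simp [hmass, hQs]
  · rw [hmass, mul_div_cancel_right₀ _ hQs]

theorem KLf_eq_klBer_of_ratio_const {Y : Type*} [Fintype Y] [DecidableEq Y]
    (P Q : Y → ℝ) (hQ : ∀ y, Q y ≠ 0) (hPsum : ∑ y, P y = 1) (hQsum : ∑ y, Q y = 1)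
    (A : Finset Y) (c d : ℝ) (hA : ∀ y ∈ A, P y = c * Q y) (hAc : ∀ y ∈ Aᶜ, P y = d * Q y) :
    KLf P Q = klBer (∑ y ∈ A, P y) (∑ y ∈ A, Q y) := by
  have hcompl : ∀ R : Y → ℝ, ∑ y, R y = 1 → ∑ y ∈ Aᶜ, R y = 1 - ∑ y ∈ A, R y :=
    fun R hR => by rw [← hR, ← sum_add_sum_compl A R, add_sub_cancel_left]
  rw [KLf_eq_sum, klBer_eq, ← sum_add_sum_compl A,
    sum_mul_log_div_of_forall_eq_mul A P Q c (fun y _ => hQ y) hA,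
    sum_mul_log_div_of_forall_eq_mul Aᶜ P Q d (fun y _ => hQ y) hAc,
    hcompl P hPsum, hcompl Q hQsum]

theorem edfl_equality_general (Y : Type*) [Fintype Y] [Nonempty Y] [DecidableEq Y]
    (Sbar : Y → ℝ) (hpos : ∀ y, 0 < Sbar y) (hsum : ∑ y, Sbar y = 1)
    (A : Finset Y)
    (lam : ℝ) (Z : ℝ)
    (hZ : Z = ∑ y, Sbar y * Real.exp (lam * (if y ∈ A then (1 : ℝ) else 0)))
    (Pstar : Y → ℝ)
    (hPstar : ∀ y, Pstar y = Sbar y * Real.exp (lam * (if y ∈ A then (1 : ℝ) else 0)) / Z) :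
    KLf Pstar Sbar = klBer (∑ y ∈ A, Pstar y) (∑ y ∈ A, Sbar y) := by
  have hZpos : 0 < Z := hZ ▸ sum_pos (fun y _ => mul_pos (hpos y) (exp_pos _)) univ_nonempty
  have hPsum : ∑ y, Pstar y = 1 := by
    rw [sum_congr rfl fun y _ => hPstar y, ← sum_div, ← hZ, div_self hZpos.ne']
  refine KLf_eq_klBer_of_ratio_const Pstar Sbar (fun y => (hpos y).ne') hPsum hsum A
    (exp lam / Z) (1 / Z) (fun y hy => ?_) (fun y hy => ?_)
  · rw [hPstar y, if_pos hy, mul_one]; ring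
  · rw [hPstar y, if_neg (mem_compl.mp hy), mul_zero, exp_zero]; ring

/-- **Equality case of EDFL (I-projection).** For a strictly positive pmf `S̄` on a finite
type, an event `A` with `0 < S̄(A) < 1`, and the exponentially tilted distribution
`P*(y) = S̄(y)·e^{λ·1_A(y)} / Z`, we have `KL(P*‖S̄) = klBer(P*(A), S̄(A))`. -/
theorem edfl_equality (Y : Type*) [Fintype Y] [Nonempty Y] [DecidableEq Y]
    (Sbar : Y → ℝ) (hpos : ∀ y, 0 < Sbar y) (hsum : ∑ y, Sbar y = 1)
    (A : Finset Y) (hA0 : 0 < ∑ y ∈ A, Sbar y) (hA1 : ∑ y ∈ A, Sbar y < 1)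
    (lam : ℝ) (Z : ℝ)
    (hZ : Z = ∑ y, Sbar y * Real.exp (lam * (if y ∈ A then (1 : ℝ) else 0)))
    (Pstar : Y → ℝ)
    (hPstar : ∀ y, Pstar y = Sbar y * Real.exp (lam * (if y ∈ A then (1 : ℝ) else 0)) / Z) :
    KLf Pstar Sbar = klBer (∑ y ∈ A, Pstar y) (∑ y ∈ A, Sbar y) :=
  edfl_equality_general Y Sbar hpos hsum A lam Z hZ Pstar hPstar
end
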